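/- arXiv:1410.0979 — 5 statements merged into one kernel-verified Lean document; each statement's English description precedes it below -/
import Mathlib

section
/- For the Dorfman two-stage expected tests per person E(k,p) = 1 - (1-p)^k + 1/k (k ≥ 2), and E(1,p) = 1, if p > 1 - (1/3)^(1/3) then individual testing is optimal: E(1,p) ≤ E(k,p) for all integers k ≥ 2. -/
open Real Set Filter

/-- Expected number of tests per person in the Dorfman two-stage procedure
with group size `k` and prevalence `p`: `E 1 p = 1` and
`E k p = 1 - (1-p)^k + 1/k` for `k ≥ 2`. -/
noncomputable def E (k : ℕ) (p : ℝ) : ℝ :=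
  if k = 1 then 1 else 1 - (1 - p) ^ k + 1 / k

/-- Optimal expected number of tests per person: infimum over group sizes `k ≥ 1`. -/
noncomputable def Estar (p : ℝ) : ℝ := ⨅ k : ℕ+, E k p

/-- Loss of using group size `k` at prevalence `p`. -/
noncomputable def L (k : ℕ) (p : ℝ) : ℝ := E k p - Estar p

/-! With `q = 1 - p`, individual testing beats group size `k` exactly when `q ^ k ≤ 1 / k`.
If `q ^ 3 ≤ 1 / 3` then `(q ^ k) ^ 3 = (q ^ 3) ^ k ≤ 3⁻ᵏ ≤ k⁻³`, the last step being
the elementary bound `k ^ 3 ≤ 3 ^ k`. -/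

theorem Nat.cube_le_three_pow : ∀ k : ℕ, k ^ 3 ≤ 3 ^ k
  | 0 | 1 | 2 | 3 => by norm_num
  | k + 4 => by
    have ih := Nat.cube_le_three_pow (k + 3)
    calc (k + 4) ^ 3 ≤ 3 * (k + 3) ^ 3 := by ring_nf; omega
      _ ≤ 3 * 3 ^ (k + 3) := Nat.mul_le_mul_left 3 ih
      _ = 3 ^ (k + 4) := by ring

theorem pow_le_one_div_of_cube_le_one_third {q : ℝ} (hq : 0 ≤ q) (h : q ^ 3 ≤ 1 / 3)
    {k : ℕ} (hk : k ≠ 0) : q ^ k ≤ 1 / k := by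
  have hk₀ : (0 : ℝ) < k := by positivity
  have hcube : (k : ℝ) ^ 3 ≤ 3 ^ k := by exact_mod_cast Nat.cube_le_three_pow k
  refine le_of_pow_le_pow_left₀ three_ne_zero (by positivity) ?_
  calc (q ^ k) ^ 3 = (q ^ 3) ^ k := by rw [← pow_mul, ← pow_mul, mul_comm]
    _ ≤ (1 / 3) ^ k := pow_le_pow_left₀ (by positivity) h k
    _ = 1 / 3 ^ k := by rw [div_pow, one_pow]
    _ ≤ 1 / (k : ℝ) ^ 3 := one_div_le_one_div_of_le (by positivity) hcube
    _ = (1 / k) ^ 3 := by rw [div_pow, one_pow]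

theorem E_one (p : ℝ) : E 1 p = 1 := if_pos rfl

theorem E_one_le_E_iff {k : ℕ} (hk : k ≠ 1) (p : ℝ) : E 1 p ≤ E k p ↔ (1 - p) ^ k ≤ 1 / k := by
  rw [E_one, E, if_neg hk]
  constructor <;> intro h <;> linarith

theorem individual_testing_optimal_for_large_p_general (p : ℝ) (hp1 : p < 1)
    (hp : p > 1 - ((1:ℝ)/3) ^ ((1:ℝ)/3)) :
    ∀ k : ℕ, 2 ≤ k → E 1 p ≤ E k p := by
  intro k hk
  rw [E_one_le_E_iff (by omega)]
  have hq : 0 ≤ 1 - p := by linarith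
  have hq_cube : (1 - p) ^ 3 ≤ 1 / 3 := by
    have h : 1 - p < ((1:ℝ)/3) ^ ((3:ℝ)⁻¹) := by rw [inv_eq_one_div]; linarith
    rw [lt_rpow_inv_iff_of_pos hq (by norm_num) (by norm_num)] at h
    exact_mod_cast h.le
  exact pow_le_one_div_of_cube_le_one_third hq hq_cube (by omega)

theorem individual_testing_optimal_for_large_p (p : ℝ) (hp0 : 0 < p) (hp1 : p < 1)
    (hp : p > 1 - ((1:ℝ)/3) ^ ((1:ℝ)/3)) :
    ∀ k : ℕ, 2 ≤ k → E 1 p ≤ E k p :=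
  individual_testing_optimal_for_large_p_general p hp1 hp
end

section
/- A group size of 2 is never optimal for the Dorfman procedure: for every p ∈ (0,1) there exists k ∈ {1,3,4,...} with E(k,p) ≤ E(2,p), and in fact min(E(1,p), E(3,p)) ≤ E(2,p). -/
open Real Set Filter

/-! With `q = 1 - p`, `E 2 p - E 3 p = 1/6 - q² (1 - q)`, and on `q ≥ 0` the cubic `q² (1 - q)`
peaks at `q = 2/3` with value `4/27 < 1/6`. -/

lemma E_of_two_le {k : ℕ} (hk : 2 ≤ k) (p : ℝ) : E k p = 1 - (1 - p) ^ k + 1 / k :=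
  if_neg (by omega)

lemma sq_mul_one_sub_le {q : ℝ} (hq : 0 ≤ q) : q ^ 2 * (1 - q) ≤ 4 / 27 := by
  -- `4/27 - q² (1 - q) = (q - 2/3)² (q + 1/3)`
  nlinarith [mul_nonneg (sq_nonneg (q - 2 / 3)) (by linarith : (0 : ℝ) ≤ q + 1 / 3)]

lemma E_three_le_E_two {p : ℝ} (hp : p ≤ 1) : E 3 p ≤ E 2 p := by
  rw [E_of_two_le (by norm_num), E_of_two_le le_rfl]
  have := sq_mul_one_sub_le (sub_nonneg.mpr hp)
  push_cast
  linarith [show (1 - p) ^ 2 * (1 - (1 - p)) = (1 - p) ^ 2 - (1 - p) ^ 3 by ring]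

theorem group_size_two_never_optimal (p : ℝ) (hp : p ∈ Set.Ioo (0:ℝ) 1) :
    (∃ k : ℕ, 1 ≤ k ∧ k ≠ 2 ∧ E k p ≤ E 2 p) ∧ min (E 1 p) (E 3 p) ≤ E 2 p := by
  have h32 := E_three_le_E_two hp.2.le
  exact ⟨⟨3, by norm_num, by norm_num, h32⟩, (min_le_right _ _).trans h32⟩
end

section
/- For each integer k ≥ 3, the equation q^k(1-q) = 1/(k(k+1)) has exactly two roots r₁(k) < r₂(k) in (0,1), and both r₁(k) and r₂(k) are strictly increasing in k. -/
/-!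
Write `f k q = q ^ k * (1 - q)` and `c k = 1 / (k * (k + 1))`. The function `f k` increases on
`[0, k/(k+1)]`, decreases on `[k/(k+1), 1]` and vanishes at both ends, while its peak value
`k ^ k / (k + 1) ^ (k + 1)` exceeds `c k` because `(1 + 1/k) ^ k < e < k`; so the level `c k` is
attained exactly once on each side of the peak.

For monotonicity, `f (k + 1) q = q * f k q` and `c (k + 1) = k / (k + 2) * c k`, so at a root `r` of
level `k` we have `f (k + 1) r < c (k + 1)` iff `r < k / (k + 2)`. The right root lies beyond the
peak `k/(k+1) > k/(k+2)`, hence strictly between the two roots of level `k + 1`. The left root lies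
below `k / (k + 2)` because `f k (k / (k + 2)) > c k`, i.e. `(1 + 2/k) ^ k * (k + 2) < 2k(k + 1)`,
which follows from `e ^ 2 < 8` for `k ≥ 5` and is checked directly for `k = 3, 4`.
-/

open Real Set Filter

namespace DorfmanRoots

noncomputable def f (k : ℕ) (q : ℝ) : ℝ := q ^ k * (1 - q)

noncomputable def c (k : ℕ) : ℝ := 1 / ((k : ℝ) * (k + 1))

variable {k : ℕ} {q : ℝ}

lemma c_pos (hk : 0 < k) : 0 < c k := by
  unfold c; positivity

lemma c_succ (hk : 0 < k) : c (k + 1) = k / (k + 2) * c k := by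
  have : (0 : ℝ) < k := by exact_mod_cast hk
  unfold c; push_cast; field_simp; ring

lemma f_zero (hk : k ≠ 0) : f k 0 = 0 := by
  simp [f, hk]

lemma f_one (k : ℕ) : f k 1 = 0 := by
  simp [f]

lemma f_succ (k : ℕ) (q : ℝ) : f (k + 1) q = q * f k q := by
  unfold f; ring

lemma continuous_f (k : ℕ) : Continuous (f k) := by
  unfold f; fun_prop

lemma hasDerivAt_f (hk : 0 < k) (q : ℝ) :
    HasDerivAt (f k) (q ^ (k - 1) * (k - (k + 1) * q)) q := by
  refine ((hasDerivAt_pow k q).mul ((hasDerivAt_id' q).const_sub 1)).congr_deriv ?_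
  obtain ⟨j, rfl⟩ := Nat.exists_eq_add_of_le' hk
  simp only [Nat.add_sub_cancel]; push_cast; ring

lemma strictMonoOn_f (hk : 0 < k) : StrictMonoOn (f k) (Icc 0 (k / (k + 1))) := by
  refine strictMonoOn_of_hasDerivWithinAt_pos (convex_Icc _ _) (continuous_f k).continuousOn
    (fun q _ => (hasDerivAt_f hk q).hasDerivWithinAt) fun q hq => ?_
  rw [interior_Icc] at hq
  have : (k + 1) * q < k := (lt_div_iff₀' (by positivity)).1 hq.2
  exact mul_pos (pow_pos hq.1 _) (by linarith)

lemma strictAntiOn_f (hk : 0 < k) : StrictAntiOn (f k) (Icc (k / (k + 1)) 1) := by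
  refine strictAntiOn_of_hasDerivWithinAt_neg (convex_Icc _ _) (continuous_f k).continuousOn
    (fun q _ => (hasDerivAt_f hk q).hasDerivWithinAt) fun q hq => ?_
  rw [interior_Icc] at hq
  have : k < (k + 1) * q := (div_lt_iff₀' (by positivity)).1 hq.1
  exact mul_neg_of_pos_of_neg (pow_pos (lt_trans (by positivity) hq.1) _) (by linarith)

lemma f_div_add {a : ℝ} (ha : (k : ℝ) + a ≠ 0) (hk : 0 < k) :
    f k (k / (k + a)) = a / ((1 + a / k) ^ k * (k + a)) := by
  have hk' : (k : ℝ) ≠ 0 := by positivity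
  have : 1 + a / k = (k + a) / k := by field_simp
  rw [f, this, div_pow, div_pow]; field_simp; ring

lemma c_lt_f_div_add {a : ℝ} (ha : 0 < a) (hk : 0 < k)
    (h : (1 + a / k) ^ k * (k + a) < a * (k * (k + 1))) : c k < f k (k / (k + a)) := by
  have hk' : (0 : ℝ) < k := by exact_mod_cast hk
  calc c k = a / (a * (k * (k + 1))) := by unfold c; field_simp
    _ < a / ((1 + a / k) ^ k * (k + a)) := div_lt_div_of_pos_left ha (by positivity) h
    _ = f k (k / (k + a)) := (f_div_add (by positivity) hk).symm

lemma one_add_div_pow_le_exp {a : ℝ} (ha : -a ≤ k) : (1 + a / k) ^ k ≤ exp a := by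
  simpa [sub_eq_add_neg, neg_div] using one_sub_div_pow_le_exp_neg ha

lemma c_lt_f_peak (hk : 3 ≤ k) : c k < f k (k / (k + 1)) := by
  have hk' : (3 : ℝ) ≤ k := by exact_mod_cast hk
  refine c_lt_f_div_add one_pos (by omega) ?_
  have he : exp 1 < 3 := lt_trans exp_one_lt_d9 (by norm_num)
  calc (1 + 1 / k) ^ k * (k + 1) ≤ exp 1 * (k + 1) := by
        gcongr; exact one_add_div_pow_le_exp (by linarith)
    _ < 3 * (k + 1) := by gcongr
    _ ≤ 1 * (k * (k + 1)) := by nlinarith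

lemma c_lt_f_div_add_two (hk : 3 ≤ k) : c k < f k (k / (k + 2)) := by
  obtain rfl | rfl | hk5 : k = 3 ∨ k = 4 ∨ 5 ≤ k := by omega
  · norm_num [c, f]
  · norm_num [c, f]
  have hk' : (5 : ℝ) ≤ k := by exact_mod_cast hk5
  refine c_lt_f_div_add two_pos (by omega) ?_
  have he : exp 2 < 8 := by
    rw [show (2 : ℝ) = 1 + 1 by norm_num, exp_add]
    nlinarith [exp_one_lt_d9, exp_pos 1]
  calc (1 + 2 / k) ^ k * (k + 2) ≤ exp 2 * (k + 2) := by
        gcongr; exact one_add_div_pow_le_exp (by linarith)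
    _ < 8 * (k + 2) := by gcongr
    _ ≤ 2 * (k * (k + 1)) := by nlinarith

lemma exists_root_left (hk : 3 ≤ k) : ∃ q ∈ Ioo 0 ((k : ℝ) / (k + 1)), f k q = c k :=
  intermediate_value_Ioo (by positivity) (continuous_f k).continuousOn
    ⟨by rw [f_zero (by omega)]; exact c_pos (by omega), c_lt_f_peak hk⟩

lemma exists_root_right (hk : 3 ≤ k) : ∃ q ∈ Ioo ((k : ℝ) / (k + 1)) 1, f k q = c k :=
  intermediate_value_Ioo' (div_le_one_of_le₀ (by linarith) (by positivity))
    (continuous_f k).continuousOn ⟨by rw [f_one]; exact c_pos (by omega), c_lt_f_peak hk⟩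

noncomputable def r₁ (k : ℕ) : ℝ := if h : 3 ≤ k then (exists_root_left h).choose else 0

noncomputable def r₂ (k : ℕ) : ℝ := if h : 3 ≤ k then (exists_root_right h).choose else 0

lemma r₁_mem (hk : 3 ≤ k) : r₁ k ∈ Ioo 0 ((k : ℝ) / (k + 1)) := by
  rw [r₁, dif_pos hk]; exact (exists_root_left hk).choose_spec.1

lemma f_r₁ (hk : 3 ≤ k) : f k (r₁ k) = c k := by
  rw [r₁, dif_pos hk]; exact (exists_root_left hk).choose_spec.2

lemma r₂_mem (hk : 3 ≤ k) : r₂ k ∈ Ioo ((k : ℝ) / (k + 1)) 1 := by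
  rw [r₂, dif_pos hk]; exact (exists_root_right hk).choose_spec.1

lemma f_r₂ (hk : 3 ≤ k) : f k (r₂ k) = c k := by
  rw [r₂, dif_pos hk]; exact (exists_root_right hk).choose_spec.2

lemma eq_r₁_or_eq_r₂ (hk : 3 ≤ k) (hq : q ∈ Ioo 0 1) (h : f k q = c k) :
    q = r₁ k ∨ q = r₂ k := by
  rcases le_or_gt q (k / (k + 1)) with hqm | hqm
  · exact .inl <| (strictMonoOn_f (by omega)).injOn ⟨hq.1.le, hqm⟩
      (Ioo_subset_Icc_self (r₁_mem hk)) (h.trans (f_r₁ hk).symm)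
  · exact .inr <| (strictAntiOn_f (by omega)).injOn ⟨hqm.le, hq.2.le⟩
      (Ioo_subset_Icc_self (r₂_mem hk)) (h.trans (f_r₂ hk).symm)

lemma r₁_lt_r₂ (hk : 3 ≤ k) : r₁ k < r₂ k :=
  (r₁_mem hk).2.trans (r₂_mem hk).1

lemma lt_r₁_of_f_lt_c (hk : 3 ≤ k) (hq₀ : 0 ≤ q) (hqm : q ≤ k / (k + 1)) (h : f k q < c k) :
    q < r₁ k := by
  rw [← f_r₁ hk] at h
  exact (strictMonoOn_f (by omega)).lt_iff_lt ⟨hq₀, hqm⟩ (Ioo_subset_Icc_self (r₁_mem hk))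
    |>.1 h

lemma r₁_lt_of_c_lt_f (hk : 3 ≤ k) (hq : 0 ≤ q) (h : c k < f k q) : r₁ k < q := by
  rcases le_or_gt q (k / (k + 1)) with hqm | hqm
  · rw [← f_r₁ hk] at h
    exact (strictMonoOn_f (by omega)).lt_iff_lt (Ioo_subset_Icc_self (r₁_mem hk)) ⟨hq, hqm⟩
      |>.1 h
  · exact (r₁_mem hk).2.trans hqm

lemma lt_r₂_of_c_lt_f (hk : 3 ≤ k) (hq : q ≤ 1) (h : c k < f k q) : q < r₂ k := by
  rcases le_or_gt q (k / (k + 1)) with hqm | hqm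
  · exact hqm.trans_lt (r₂_mem hk).1
  · rw [← f_r₂ hk] at h
    exact (strictAntiOn_f (by omega)).lt_iff_gt (Ioo_subset_Icc_self (r₂_mem hk)) ⟨hqm.le, hq⟩
      |>.1 h

lemma r₁_lt_r₁_succ (hk : 3 ≤ k) : r₁ k < r₁ (k + 1) := by
  have hr : r₁ k < k / (k + 2) :=
    r₁_lt_of_c_lt_f hk (by positivity) (c_lt_f_div_add_two hk)
  refine lt_r₁_of_f_lt_c (by omega) (r₁_mem hk).1.le ?_ ?_
  · push_cast
    calc r₁ k ≤ k / (k + 2) := hr.le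
      _ ≤ (k + 1) / (k + 1 + 1) := by rw [div_le_div_iff₀ (by positivity) (by positivity)]; linarith
  · calc f (k + 1) (r₁ k) = r₁ k * c k := by rw [f_succ, f_r₁ hk]
      _ < k / (k + 2) * c k := mul_lt_mul_of_pos_right hr (c_pos (by omega))
      _ = c (k + 1) := (c_succ (by omega)).symm

lemma r₂_lt_r₂_succ (hk : 3 ≤ k) : r₂ k < r₂ (k + 1) := by
  have hk' : (0 : ℝ) < k := by positivity
  have hr : (k : ℝ) / (k + 2) < r₂ k :=
    (div_lt_div_of_pos_left hk' (by positivity) (by linarith)).trans (r₂_mem hk).1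
  refine lt_r₂_of_c_lt_f (by omega) (r₂_mem hk).2.le ?_
  calc c (k + 1) = k / (k + 2) * c k := c_succ (by omega)
    _ < r₂ k * c k := mul_lt_mul_of_pos_right hr (c_pos (by omega))
    _ = f (k + 1) (r₂ k) := by rw [f_succ, f_r₂ hk]

end DorfmanRoots

theorem two_roots_and_monotone :
    ∃ r₁ r₂ : ℕ → ℝ, ∀ k : ℕ, 3 ≤ k →
      (r₁ k ∈ Set.Ioo (0:ℝ) 1 ∧ r₂ k ∈ Set.Ioo (0:ℝ) 1 ∧ r₁ k < r₂ k ∧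
        (r₁ k) ^ k * (1 - r₁ k) = 1 / (k * (k+1)) ∧
        (r₂ k) ^ k * (1 - r₂ k) = 1 / (k * (k+1)) ∧
        (∀ q ∈ Set.Ioo (0:ℝ) 1, q ^ k * (1 - q) = 1 / (k * (k+1)) → q = r₁ k ∨ q = r₂ k)) ∧
      r₁ k < r₁ (k+1) ∧ r₂ k < r₂ (k+1) := by
  open DorfmanRoots in
  exact ⟨r₁, r₂, fun k hk =>
    ⟨⟨⟨(r₁_mem hk).1, (r₁_lt_r₂ hk).trans (r₂_mem hk).2⟩,
      ⟨(r₁_mem hk).1.trans (r₁_lt_r₂ hk), (r₂_mem hk).2⟩,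
      r₁_lt_r₂ hk, f_r₁ hk, f_r₂ hk, fun q hq => eq_r₁_or_eq_r₂ hk hq⟩,
    r₁_lt_r₁_succ hk, r₂_lt_r₂_succ hk⟩⟩
end

section
/- The optimal expected number of tests per person tends to 0 as p tends to 0 from above: lim_{p→0⁺} min_{k ≥ 1} E(k,p) = 0. -/
open Real Set Filter

/-! For a fixed group size `k ≥ 2`, `E k p → 1/k` as `p → 0`, and `Estar ≤ E k`;
since `Estar ≥ 0` and `1/k` is arbitrarily small, `Estar p → 0`. -/

lemma E_nonneg {p : ℝ} (hp : p ∈ Icc (0 : ℝ) 1) (k : ℕ) : 0 ≤ E k p := by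
  unfold E
  split_ifs
  · exact zero_le_one
  · have : (1 - p) ^ k ≤ 1 := pow_le_one₀ (by linarith [hp.2]) (by linarith [hp.1])
    have : (0 : ℝ) ≤ 1 / k := by positivity
    linarith

lemma Estar_nonneg {p : ℝ} (hp : p ∈ Icc (0 : ℝ) 1) : 0 ≤ Estar p :=
  le_ciInf fun k => E_nonneg hp k

lemma Estar_le_E {p : ℝ} (hp : p ∈ Icc (0 : ℝ) 1) {k : ℕ} (hk : 0 < k) : Estar p ≤ E k p :=
  ciInf_le (f := fun j : ℕ+ => E j p) ⟨0, by rintro _ ⟨j, rfl⟩; exact E_nonneg hp j⟩ ⟨k, hk⟩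

lemma tendsto_E_zero {k : ℕ} (hk : k ≠ 1) : Tendsto (E k) (nhds 0) (nhds (1 / k)) := by
  have hE : E k = fun p : ℝ => 1 - (1 - p) ^ k + 1 / k := funext fun p => if_neg hk
  have hcont : Continuous (E k) := by rw [hE]; fun_prop
  simpa [hE] using hcont.tendsto 0

theorem Estar_tendsto_zero :
    Filter.Tendsto Estar (nhdsWithin 0 (Set.Ioi 0)) (nhds 0) := by
  have hunit : ∀ᶠ p in nhdsWithin (0 : ℝ) (Ioi 0), p ∈ Icc (0 : ℝ) 1 :=
    mem_of_superset (Ioo_mem_nhdsGT zero_lt_one) Ioo_subset_Icc_self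
  refine tendsto_order.2 ⟨fun a ha => hunit.mono fun p hp => ha.trans_le (Estar_nonneg hp),
    fun ε hε => ?_⟩
  obtain ⟨n, hn⟩ := exists_nat_one_div_lt hε
  have hinv : (1 : ℝ) / (n + 2 : ℕ) < ε :=
    lt_of_le_of_lt (one_div_le_one_div_of_le (by positivity) (by push_cast; linarith)) hn
  have hEk : ∀ᶠ p in nhdsWithin (0 : ℝ) (Ioi 0), E (n + 2) p < ε :=
    ((tendsto_E_zero (by omega)).mono_left nhdsWithin_le_nhds).eventually (gt_mem_nhds hinv)
  filter_upwards [hunit, hEk] with p hp hE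
  exact (Estar_le_E hp (by omega)).trans_lt hE
end

section
/- If q₈* denotes the larger root in (0,1) of q^8(1-q) = 1/72 and q₇* the larger root in (0,1) of q^7(1-q) = 1/56, then q₇* < q₈*, and for every p with 1 - q₈* < p < 1 - q₇* the optimal Dorfman group size is exactly 8. -/
open Real Set Filter

/-!
Write `q = 1 - p` and `r l = l (l + 1) p q ^ l`. For `l ≥ 2` the difference `E (l + 1) p - E l p`
has the sign of `r l - 1`, and `r (l + 1) / r l = (l + 2) q / l`, so `r` increases as long as
`(l + 2) p ≤ 2`. If `r 7 < 1 < r 8` and `p ≤ 1/9`, then `E` decreases strictly from `2` to `8`,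
and beyond `8` it increases for as long as `r > 1`; once `r k ≤ 1` for some `k > 8`, the index `k`
lies past the peak of `r`, where `(k + 1) q ^ (k + 1) < r k ≤ 1`, i.e. `E (k + 1) p > 1 = E 1 p`.
Finally `q ↦ q ^ l (1 - q)` decreases on `[l / (l + 1), 1]` and both larger roots exceed `8/9`
by the intermediate value theorem, so `1 - q₈* < p < 1 - q₇*` gives exactly `r 7 < 1 < r 8`.
-/

-- `E (l + 1) p - E l p` has the sign of `incrementRatio p l - 1` (see `E_succ_sub`).
noncomputable def incrementRatio (p : ℝ) (l : ℕ) : ℝ := l * (l + 1) * p * (1 - p) ^ l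

lemma E_succ_sub {l : ℕ} (hl : 2 ≤ l) (p : ℝ) :
    E (l + 1) p - E l p = (incrementRatio p l - 1) / (l * (l + 1)) := by
  have : (l : ℝ) ≠ 0 := by exact_mod_cast (show l ≠ 0 by omega)
  rw [E_of_two_le hl, E_of_two_le (by omega), incrementRatio]
  push_cast
  field_simp
  ring

lemma lt_E_succ_iff {l : ℕ} (hl : 2 ≤ l) (p : ℝ) :
    E l p < E (l + 1) p ↔ 1 < incrementRatio p l := by
  rw [← sub_pos, E_succ_sub hl, div_pos_iff_of_pos_right (by positivity), sub_pos]

lemma E_succ_lt_iff {l : ℕ} (hl : 2 ≤ l) (p : ℝ) :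
    E (l + 1) p < E l p ↔ incrementRatio p l < 1 := by
  rw [← sub_neg, E_succ_sub hl, div_lt_iff₀ (by positivity), zero_mul, sub_neg]

lemma one_lt_E_iff {k : ℕ} (hk : 2 ≤ k) (p : ℝ) : 1 < E k p ↔ k * (1 - p) ^ k < 1 := by
  have hk0 : (0 : ℝ) < k := by exact_mod_cast (show 0 < k by omega)
  rw [E_of_two_le hk, ← sub_pos, ← mul_lt_mul_iff_of_pos_left hk0]
  field_simp
  constructor <;> intro h <;> linarith

lemma incrementRatio_succ_sub (p : ℝ) (l : ℕ) :
    incrementRatio p (l + 1) - incrementRatio p l =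
      (l + 1) * p * (1 - p) ^ l * (2 - (l + 2) * p) := by
  unfold incrementRatio
  push_cast
  ring

lemma incrementRatio_le_succ {p : ℝ} (hp0 : 0 ≤ p) (hp1 : p ≤ 1) {l : ℕ}
    (hl : (l + 2) * p ≤ 2) : incrementRatio p l ≤ incrementRatio p (l + 1) := by
  rw [← sub_nonneg, incrementRatio_succ_sub]
  have : 0 ≤ 1 - p := by linarith
  have : 0 ≤ 2 - (l + 2) * p := by linarith
  positivity

lemma incrementRatio_mono {p : ℝ} (hp0 : 0 ≤ p) (hp1 : p ≤ 1) {l m : ℕ} (hlm : l ≤ m)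
    (hm : (m + 2) * p ≤ 2) : incrementRatio p l ≤ incrementRatio p m := by
  induction m, hlm using Nat.le_induction with
  | base => exact le_rfl
  | succ m hlm ih =>
    push_cast at hm
    have hm' : (m + 2) * p ≤ 2 := by linarith
    exact (ih hm').trans (incrementRatio_le_succ hp0 hp1 hm')

lemma E_succ_lt_of_le {p : ℝ} (hp0 : 0 ≤ p) (hp1 : p ≤ 1) {k l : ℕ} (hk : 2 ≤ k)
    (hkl : k ≤ l) (hl : (l + 1) * p ≤ 2) (hratio : incrementRatio p l < 1) :
    E (l + 1) p < E k p := by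
  induction l, hkl using Nat.le_induction with
  | base => exact (E_succ_lt_iff hk p).2 hratio
  | succ m hkm ih =>
    push_cast at hl
    have hm : (m + 2) * p ≤ 2 := by linarith
    have hstep : E (m + 1 + 1) p < E (m + 1) p := (E_succ_lt_iff (by omega) p).2 hratio
    exact hstep.trans (ih (by linarith) ((incrementRatio_le_succ hp0 hp1 hm).trans_lt hratio))

lemma lt_E_of_lt {p : ℝ} (hp0 : 0 < p) (hp1 : p < 1) {l k : ℕ} (hl : 2 ≤ l)
    (hratio : 1 < incrementRatio p l) (hE : E l p < 1) (hlk : l < k) : E l p < E k p := by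
  induction k, hlk using Nat.le_induction with
  | base => exact (lt_E_succ_iff hl p).2 hratio
  | succ k hlk ih =>
    rcases lt_or_ge 1 (incrementRatio p k) with hk | hk
    · exact ih.trans ((lt_E_succ_iff (by omega) p).2 hk)
    · refine hE.trans ((one_lt_E_iff (by omega) p).2 ?_)
      -- `incrementRatio p` cannot have dropped from above `1` at `l` to `≤ 1` at `k` before its peak
      have hpeak : 1 - p < k * p := by
        by_contra! h
        have := incrementRatio_mono hp0.le hp1.le (by omega : l ≤ k) (by linarith)
        linarith
      calc ((k + 1 : ℕ) : ℝ) * (1 - p) ^ (k + 1) = (k + 1) * (1 - p) ^ k * (1 - p) := by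
            push_cast; ring
        _ < (k + 1) * (1 - p) ^ k * (k * p) := by gcongr
        _ = incrementRatio p k := by unfold incrementRatio; ring
        _ ≤ 1 := hk

lemma E_lt_one_of_one_lt_incrementRatio {p : ℝ} (hp0 : 0 ≤ p) {l : ℕ} (hl : 2 ≤ l)
    (hp : (l + 1) * p ≤ 1) (hratio : 1 < incrementRatio p l) : E l p < 1 := by
  have hq : 0 ≤ 1 - p := by nlinarith
  have hl0 : (0 : ℝ) < l := by exact_mod_cast (show 0 < l by omega)
  have : 1 < l * (1 - p) ^ l :=
    calc 1 < incrementRatio p l := hratio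
      _ = l * (1 - p) ^ l * ((l + 1) * p) := by unfold incrementRatio; ring
      _ ≤ l * (1 - p) ^ l := mul_le_of_le_one_right (by positivity) hp
  rw [E_of_two_le hl, ← sub_pos, ← mul_lt_mul_iff_of_pos_left hl0]
  field_simp
  linarith

theorem E_succ_lt_of_ne {p : ℝ} (hp0 : 0 < p) {l : ℕ} (hl : 2 ≤ l) (hp : (l + 2) * p ≤ 1)
    (hdown : incrementRatio p l < 1) (hup : 1 < incrementRatio p (l + 1))
    {k : ℕ} (hk : 1 ≤ k) (hkl : k ≠ l + 1) : E (l + 1) p < E k p := by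
  have hp1 : p < 1 := by nlinarith
  have hE : E (l + 1) p < 1 :=
    E_lt_one_of_one_lt_incrementRatio hp0.le (by omega) (by push_cast; linarith) hup
  rcases lt_trichotomy k (l + 1) with hkl' | rfl | hkl'
  · rcases eq_or_lt_of_le hk with rfl | hk2
    · simpa [E] using hE
    · exact E_succ_lt_of_le hp0.le hp1.le hk2 (by omega) (by nlinarith) hdown
  · exact absurd rfl hkl
  · exact lt_E_of_lt hp0 hp1 (by omega) hup hE hkl'

lemma strictAntiOn_pow_mul_one_sub (l : ℕ) :
    StrictAntiOn (fun q : ℝ => q ^ l * (1 - q)) (Icc (l / (l + 1)) 1) := by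
  refine strictAntiOn_of_deriv_neg (convex_Icc _ _) (by fun_prop) fun x hx => ?_
  rw [interior_Icc] at hx
  have hx0 : 0 < x := lt_of_le_of_lt (by positivity) hx.1
  have hlx : l < (l + 1) * x := by
    have := hx.1
    rwa [div_lt_iff₀ (by positivity), mul_comm] at this
  have hderiv : x * deriv (fun q : ℝ => q ^ l * (1 - q)) x = x ^ l * (l - (l + 1) * x) := by
    have hpow : x * (l * x ^ (l - 1)) = l * x ^ l := by
      rcases Nat.eq_zero_or_pos l with rfl | hl
      · simp
      · rw [mul_left_comm, mul_pow_sub_one hl.ne']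
    have hd : HasDerivAt (fun q : ℝ => q ^ l * (1 - q))
        (l * x ^ (l - 1) * (1 - x) + x ^ l * (-1)) x :=
      (hasDerivAt_pow l x).mul ((hasDerivAt_id x).const_sub 1)
    rw [hd.deriv]
    linear_combination (1 - x) * hpow
  have : x * deriv (fun q : ℝ => q ^ l * (1 - q)) x < 0 := by
    rw [hderiv]
    exact mul_neg_of_pos_of_neg (by positivity) (by linarith)
  exact neg_of_mul_neg_right this hx0.le

lemma lt_of_forall_root_le {l : ℕ} {a c r : ℝ} (ha0 : 0 ≤ a) (ha1 : a < 1) (hc : 0 < c)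
    (hca : c < a ^ l * (1 - a)) (hr : ∀ q ∈ Ioo (0 : ℝ) 1, q ^ l * (1 - q) = c → q ≤ r) :
    a < r := by
  obtain ⟨q, hq, hqc⟩ : c ∈ (fun q : ℝ => q ^ l * (1 - q)) '' Ioo a 1 :=
    intermediate_value_Ioo' ha1.le (by fun_prop) ⟨by simpa using hc, hca⟩
  exact hq.1.trans_le (hr q ⟨ha0.trans_lt hq.1, hq.2⟩ hqc)

theorem optimality_range_of_eight (q7 q8 : ℝ)
    (hq8 : q8 ∈ Set.Ioo (0:ℝ) 1) (hq8root : q8 ^ 8 * (1 - q8) = 1 / 72)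
    (hq8max : ∀ q ∈ Set.Ioo (0:ℝ) 1, q ^ 8 * (1 - q) = 1 / 72 → q ≤ q8)
    (hq7 : q7 ∈ Set.Ioo (0:ℝ) 1) (hq7root : q7 ^ 7 * (1 - q7) = 1 / 56)
    (hq7max : ∀ q ∈ Set.Ioo (0:ℝ) 1, q ^ 7 * (1 - q) = 1 / 56 → q ≤ q7) :
    q7 < q8 ∧
    ∀ p : ℝ, 1 - q8 < p → p < 1 - q7 →
      ∀ k : ℕ, 1 ≤ k → (E 8 p ≤ E k p ∧ (k ≠ 8 → E 8 p < E k p)) := by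
  obtain ⟨-, hq81⟩ := hq8
  obtain ⟨-, hq71⟩ := hq7
  have h7 : 8 / 9 < q7 := lt_of_forall_root_le (by norm_num) (by norm_num) (by norm_num)
    (by norm_num) hq7max
  have h8 : 8 / 9 < q8 := lt_of_forall_root_le (by norm_num) (by norm_num) (by norm_num)
    (by norm_num) hq8max
  have hanti7 : StrictAntiOn (fun q : ℝ => q ^ 7 * (1 - q)) (Icc (8 / 9) 1) :=
    (strictAntiOn_pow_mul_one_sub 7).mono (Icc_subset_Icc_left (by norm_num))
  have hanti8 : StrictAntiOn (fun q : ℝ => q ^ 8 * (1 - q)) (Icc (8 / 9) 1) :=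
    (strictAntiOn_pow_mul_one_sub 8).mono (Icc_subset_Icc_left (by norm_num))
  have hq78 : q7 < q8 := by
    by_contra! h
    have := hanti8.antitoneOn ⟨h8.le, hq81.le⟩ ⟨h8.le.trans h, hq71.le⟩ h
    nlinarith
  refine ⟨hq78, fun p hp8 hp7 k hk => ?_⟩
  have hdown : incrementRatio p 7 < 1 := by
    have := hanti7 ⟨h7.le, hq71.le⟩ ⟨by linarith, by linarith⟩ (by linarith : q7 < 1 - p)
    simp only [sub_sub_cancel] at this
    unfold incrementRatio; norm_num; linarith
  have hup : 1 < incrementRatio p 8 := by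
    have := hanti8 ⟨by linarith, by linarith⟩ ⟨h8.le, hq81.le⟩ (by linarith : 1 - p < q8)
    simp only [sub_sub_cancel] at this
    unfold incrementRatio; norm_num; linarith
  have hopt : k ≠ 8 → E 8 p < E k p :=
    E_succ_lt_of_ne (l := 7) (by linarith) (by norm_num) (by norm_num; linarith) hdown hup hk
  exact ⟨(eq_or_ne k 8).elim (fun h => h ▸ le_rfl) fun hne => (hopt hne).le, hopt⟩
end
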